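/- arXiv:2305.04357 — 4 statements merged into one kernel-verified Lean document; each statement's English description precedes it below -/
import Mathlib

section
/- The interventional consistency error dominates the interventional superresolution information loss: E_IC ≥ E_ISIL, i.e., D(α_Y·μ, μ'·α_X) ≥ D(μ', α_Y·μ·α_X⁺). -/
/-!
Write `αX` as the matrix of a surjection `f : X → X'`. Then `αX⁺` averages over the fibres of `f`:
column `x'` of `αY μ αX⁺` is the mean of the columns `x ∈ f⁻¹(x')` of `αY μ`, while column `x` of
`μ' αX` is column `f x` of `μ'`. By the log-sum inequality the squared Jensen–Shannon distance is
convex in its second argument, so `μ'(·, x')` is no farther from the mean than from some column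
`(αY μ)(·, x)` with `f x = x'`, and that distance is one of those maximised in `E_IC`.
-/

open Finset Matrix

noncomputable section

/-- A probability vector on a finite type: nonnegative entries summing to 1. -/
def IsProbVec {X : Type*} [Fintype X] (p : X → ℝ) : Prop :=
  (∀ x, 0 ≤ p x) ∧ ∑ x, p x = 1

/-- Kullback–Leibler divergence, with the convention that terms with `p x = 0`
contribute `0`. -/
noncomputable def KL {X : Type*} [Fintype X] (p q : X → ℝ) : ℝ :=
  ∑ x, if p x = 0 then 0 else p x * Real.log (p x / q x)

/-- Jensen–Shannon distance. -/
noncomputable def JSD {X : Type*} [Fintype X] (p q : X → ℝ) : ℝ :=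
  Real.sqrt ((1 / 2) * KL p (fun x => (p x + q x) / 2)
    + (1 / 2) * KL q (fun x => (p x + q x) / 2))

/-- A column-stochastic matrix: nonnegative entries, every column sums to 1. -/
def IsColStoch {Y X : Type*} [Fintype Y] [Fintype X] (M : Matrix Y X ℝ) : Prop :=
  (∀ y x, 0 ≤ M y x) ∧ ∀ x, ∑ y, M y x = 1

/-- The sup-JSD distance between two matrices of the same shape:
the maximum over columns of the JSD between corresponding columns. -/
noncomputable def supJSD {Y X : Type*} [Fintype Y] [Fintype X] [Nonempty X]
    (M N : Matrix Y X ℝ) : ℝ :=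
  Finset.univ.sup' Finset.univ_nonempty fun x => JSD (fun y => M y x) (fun y => N y x)

/-- An abstraction matrix: entries in {0,1}, every column contains exactly one 1,
and every row contains at least one 1. -/
def IsAbsMatrix {N M : Type*} [Fintype N] [Fintype M] (α : Matrix N M ℝ) : Prop :=
  (∀ j i, α j i = 0 ∨ α j i = 1) ∧ (∀ i, ∃! j, α j i = 1) ∧ (∀ j, ∃ i, α j i = 1)

/-- The pseudo-inverse `α⁺ = αᵀ·(α·αᵀ)⁻¹` of an abstraction matrix. -/
noncomputable def pinv {N M : Type*} [Fintype N] [Fintype M] [DecidableEq N]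
    (α : Matrix N M ℝ) : Matrix M N ℝ :=
  αᵀ * (α * αᵀ)⁻¹

lemma sub_le_mul_log_div {a b : ℝ} (ha : 0 ≤ a) (hb : 0 ≤ b) (hab : b = 0 → a = 0) :
    a - b ≤ a * Real.log (a / b) := by
  rcases ha.eq_or_lt with rfl | ha
  · simpa using hb
  have hb : 0 < b := hb.lt_of_ne fun h => ha.ne' (hab h.symm)
  have := Real.one_sub_inv_le_log_of_pos (div_pos ha hb)
  rw [inv_div] at this
  calc a - b = a * (1 - b / a) := by field_simp
    _ ≤ a * Real.log (a / b) := by gcongr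

/-- The log-sum inequality. -/
theorem sum_mul_log_div_le {ι : Type*} (s : Finset ι) {f g : ι → ℝ}
    (hf : ∀ i ∈ s, 0 ≤ f i) (hg : ∀ i ∈ s, 0 ≤ g i) (hfg : ∀ i ∈ s, g i = 0 → f i = 0) :
    (∑ i ∈ s, f i) * Real.log ((∑ i ∈ s, f i) / ∑ i ∈ s, g i)
      ≤ ∑ i ∈ s, f i * Real.log (f i / g i) := by
  rcases (sum_nonneg hf).eq_or_lt with hF | hF
  · rw [← hF, zero_mul]
    refine sum_nonneg fun i hi => ?_
    rw [(sum_eq_zero_iff_of_nonneg hf).1 hF.symm i hi, zero_mul]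
  have hG : 0 < ∑ i ∈ s, g i := (sum_nonneg hg).lt_of_ne fun hG => hF.ne' <|
    sum_eq_zero fun i hi => hfg i hi ((sum_eq_zero_iff_of_nonneg hg).1 hG.symm i hi)
  set c := (∑ i ∈ s, f i) / ∑ i ∈ s, g i
  have hc : 0 < c := div_pos hF hG
  -- Gibbs: compare `f` with `g` rescaled by `c` to the same total mass.
  have key : ∀ i ∈ s, f i - g i * c ≤ f i * Real.log (f i / g i) - f i * Real.log c := by
    intro i hi
    have h := sub_le_mul_log_div (hf i hi) (mul_nonneg (hg i hi) hc.le)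
      fun h => hfg i hi ((mul_eq_zero.1 h).resolve_right hc.ne')
    rcases (hf i hi).eq_or_lt with hfi | hfi
    · simpa [← hfi] using mul_nonneg (hg i hi) hc.le
    have hgi : 0 < g i := (hg i hi).lt_of_ne fun h => hfi.ne' (hfg i hi h.symm)
    rwa [← div_div, Real.log_div (div_pos hfi hgi).ne' hc.ne', mul_sub] at h
  have := sum_le_sum key
  rw [sum_sub_distrib, sum_sub_distrib, ← sum_mul, ← sum_mul, mul_div_cancel₀ _ hG.ne'] at this
  linarith

def jsTerm (a b : ℝ) : ℝ :=
  a * Real.log (a / ((a + b) / 2)) + b * Real.log (b / ((a + b) / 2))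

lemma jsTerm_mul_mul (c a b : ℝ) : jsTerm (c * a) (c * b) = c * jsTerm a b := by
  rcases eq_or_ne c 0 with rfl | hc
  · simp [jsTerm]
  have h : ((c * a + c * b) / 2) = c * ((a + b) / 2) := by ring
  simp only [jsTerm, h, mul_div_mul_left _ _ hc]
  ring

lemma jsTerm_sum_le {ι : Type*} (s : Finset ι) {a b : ι → ℝ}
    (ha : ∀ i ∈ s, 0 ≤ a i) (hb : ∀ i ∈ s, 0 ≤ b i) :
    jsTerm (∑ i ∈ s, a i) (∑ i ∈ s, b i) ≤ ∑ i ∈ s, jsTerm (a i) (b i) := by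
  have hm : (∑ i ∈ s, a i + ∑ i ∈ s, b i) / 2 = ∑ i ∈ s, (a i + b i) / 2 := by
    rw [← sum_add_distrib, sum_div]
  have hm0 : ∀ i ∈ s, 0 ≤ (a i + b i) / 2 := fun i hi => by linarith [ha i hi, hb i hi]
  have la := sum_mul_log_div_le s ha hm0 fun i hi h => by linarith [ha i hi, hb i hi]
  have lb := sum_mul_log_div_le s hb hm0 fun i hi h => by linarith [ha i hi, hb i hi]
  simp only [jsTerm, hm, sum_add_distrib]
  exact add_le_add la lb

lemma KL_eq_sum {X : Type*} [Fintype X] (p q : X → ℝ) :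
    KL p q = ∑ x, p x * Real.log (p x / q x) :=
  sum_congr rfl fun x _ => by split_ifs with h <;> simp [h]

lemma JSD_eq_sqrt_sum_jsTerm {X : Type*} [Fintype X] (p q : X → ℝ) :
    JSD p q = Real.sqrt ((∑ x, jsTerm (p x) (q x)) / 2) := by
  simp only [JSD, KL_eq_sum, jsTerm, sum_add_distrib]
  ring_nf

lemma JSD_comm {X : Type*} [Fintype X] (p q : X → ℝ) : JSD p q = JSD q p := by
  simp only [JSD_eq_sqrt_sum_jsTerm, jsTerm, add_comm (p _), add_comm (_ * Real.log (p _ / _))]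

lemma exists_JSD_average_le {Y ι : Type*} [Fintype Y] {s : Finset ι} (hs : s.Nonempty)
    {q : Y → ℝ} {p : ι → Y → ℝ} (hq : ∀ y, 0 ≤ q y) (hp : ∀ i y, 0 ≤ p i y) :
    ∃ i ∈ s, JSD q (fun y => (∑ j ∈ s, p j y) / #s) ≤ JSD q (p i) := by
  have hn : (#s : ℝ) ≠ 0 := by exact_mod_cast hs.card_pos.ne'
  -- `n * jsTerm a (B / n) = jsTerm (n * a) B`, and `n * a` is a sum of `n` copies of `a`.
  have hterm : ∀ y, #s * jsTerm (q y) ((∑ j ∈ s, p j y) / #s)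
      ≤ ∑ j ∈ s, jsTerm (q y) (p j y) := by
    intro y
    rw [← jsTerm_mul_mul, mul_div_cancel₀ _ hn, ← nsmul_eq_mul, ← sum_const]
    exact jsTerm_sum_le s (fun _ _ => hq y) fun j _ => hp j y
  obtain ⟨i, hi, hle⟩ : ∃ i ∈ s, (∑ y, jsTerm (q y) ((∑ j ∈ s, p j y) / #s)) / 2
      ≤ (∑ y, jsTerm (q y) (p i y)) / 2 := by
    refine exists_le_of_sum_le hs ?_
    rw [sum_const, nsmul_eq_mul, ← sum_div, sum_comm, mul_div_assoc', mul_sum]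
    gcongr with y
    exact hterm y
  exact ⟨i, hi, by simpa only [JSD_eq_sqrt_sum_jsTerm] using Real.sqrt_le_sqrt hle⟩

lemma IsAbsMatrix.nonneg {N M : Type*} [Fintype N] [Fintype M] {α : Matrix N M ℝ}
    (hα : IsAbsMatrix α) (j : N) (i : M) : 0 ≤ α j i := by
  rcases hα.1 j i with h | h <;> simp [h]

section funMatrix

variable {N M : Type*} [DecidableEq N]

def funMatrix (f : M → N) : Matrix N M ℝ :=
  of fun j i => if j = f i then 1 else 0

lemma IsAbsMatrix.exists_eq_funMatrix [Fintype N] [Fintype M] {α : Matrix N M ℝ}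
    (hα : IsAbsMatrix α) : ∃ f : M → N, Function.Surjective f ∧ α = funMatrix f := by
  obtain ⟨h01, hcol, hrow⟩ := hα
  choose f hf hfu using hcol
  refine ⟨f, fun j => (hrow j).imp fun i hi => (hfu i j hi).symm, ?_⟩
  ext j i
  by_cases hj : j = f i
  · simp [funMatrix, hj, hf]
  · simpa [funMatrix, hj] using (h01 j i).resolve_right fun h => hj (hfu i j h)

lemma mul_funMatrix_apply [Fintype N] {Y : Type*} (B : Matrix Y N ℝ) (f : M → N) (y : Y)
    (i : M) :
    (B * funMatrix f) y i = B y (f i) := by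
  simp [mul_apply, funMatrix]

lemma funMatrix_mul_transpose [Fintype M] (f : M → N) :
    funMatrix f * (funMatrix f)ᵀ = diagonal fun j => (#{i | f i = j} : ℝ) := by
  ext j k
  simp only [mul_apply, funMatrix, transpose_apply, of_apply, diagonal_apply, ← ite_and, mul_ite,
    mul_one, mul_zero]
  by_cases hjk : j = k
  · simp [hjk, sum_boole, eq_comm]
  · simp only [hjk, if_false]
    exact sum_eq_zero fun i _ => if_neg fun h => hjk (h.1.trans h.2.symm).symm

lemma pinv_funMatrix_apply [Fintype N] [Fintype M] {f : M → N} (hf : Function.Surjective f)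
    (i : M) (j : N) :
    pinv (funMatrix f) i j = if f i = j then (#{i | f i = j} : ℝ)⁻¹ else 0 := by
  have hcard : ∀ j, (#{i | f i = j} : ℝ) ≠ 0 := fun j => by
    obtain ⟨i, rfl⟩ := hf j
    exact_mod_cast (card_pos.2 ⟨i, by simp⟩).ne'
  have hinv : (diagonal fun j => (#{i | f i = j} : ℝ))⁻¹
      = diagonal fun j => (#{i | f i = j} : ℝ)⁻¹ :=
    inv_eq_right_inv (by simp [diagonal_mul_diagonal, hcard])
  rw [pinv, funMatrix_mul_transpose, hinv, mul_diagonal]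
  by_cases hij : f i = j
  · simp [funMatrix, hij]
  · simp [funMatrix, hij, Ne.symm hij]

lemma mul_pinv_funMatrix_apply [Fintype N] [Fintype M] {Y : Type*} (A : Matrix Y M ℝ)
    {f : M → N} (hf : Function.Surjective f) (y : Y) (j : N) :
    (A * pinv (funMatrix f)) y j = (∑ i ∈ {i | f i = j}, A y i) / #{i | f i = j} := by
  simp only [mul_apply, pinv_funMatrix_apply hf, mul_ite, mul_zero, sum_ite, sum_const_zero,
    add_zero, ← sum_mul, div_eq_mul_inv]

end funMatrix

theorem ic_ge_isil_general {X X' Y Y' : Type*}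
    [Fintype X] [Nonempty X] [Fintype X'] [Nonempty X']
    [Fintype Y] [Fintype Y']
    [DecidableEq X']
    (μ : Matrix Y X ℝ) (μ' : Matrix Y' X' ℝ)
    (αX : Matrix X' X ℝ) (αY : Matrix Y' Y ℝ)
    (hμ : IsColStoch μ) (hμ' : IsColStoch μ')
    (hαX : IsAbsMatrix αX) (hαY : IsAbsMatrix αY) :
    supJSD (αY * μ) (μ' * αX) ≥ supJSD μ' (αY * μ * pinv αX) := by
  obtain ⟨f, hf, rfl⟩ := hαX.exists_eq_funMatrix
  have hαYμ : ∀ y x, 0 ≤ (αY * μ) y x := fun y x =>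
    sum_nonneg fun z _ => mul_nonneg (hαY.nonneg y z) (hμ.1 z x)
  refine sup'_le _ _ fun x' _ => ?_
  obtain ⟨z, rfl⟩ := hf x'
  obtain ⟨x, hx, hle⟩ := exists_JSD_average_le (s := {x | f x = f z}) ⟨z, by simp⟩
    (fun y => hμ'.1 y (f z)) fun x y => hαYμ y x
  rw [mem_filter] at hx
  calc JSD (fun y => μ' y (f z)) (fun y => (αY * μ * pinv (funMatrix f)) y (f z))
      = JSD (fun y => μ' y (f z))
          (fun y => (∑ x ∈ {x | f x = f z}, (αY * μ) y x) / #{x | f x = f z}) := by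
        simp only [mul_pinv_funMatrix_apply _ hf]
    _ ≤ JSD (fun y => μ' y (f z)) (fun y => (αY * μ) y x) := hle
    _ = JSD (fun y => (αY * μ) y x) (fun y => (μ' * funMatrix f) y x) := by
        simp only [JSD_comm _ (fun y => (αY * μ) y x), mul_funMatrix_apply, hx.2]
    _ ≤ _ := le_sup' (fun x => JSD (fun y => (αY * μ) y x) (fun y => (μ' * funMatrix f) y x))
        (mem_univ x)

theorem ic_ge_isil {X X' Y Y' : Type*}
    [Fintype X] [Nonempty X] [Fintype X'] [Nonempty X']
    [Fintype Y] [Nonempty Y] [Fintype Y'] [Nonempty Y']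
    [DecidableEq X'] [DecidableEq Y']
    (μ : Matrix Y X ℝ) (μ' : Matrix Y' X' ℝ)
    (αX : Matrix X' X ℝ) (αY : Matrix Y' Y ℝ)
    (hμ : IsColStoch μ) (hμ' : IsColStoch μ')
    (hαX : IsAbsMatrix αX) (hαY : IsAbsMatrix αY) :
    supJSD (αY * μ) (μ' * αX) ≥ supJSD μ' (αY * μ * pinv αX) :=
  ic_ge_isil_general μ μ' αX αY hμ hμ' hαX hαY
end
end

section
/- The interventional superresolution consistency error dominates the interventional superresolution information loss: E_ISC ≥ E_ISIL, i.e., D(μ·α_X⁺, α_Y⁺·μ') ≥ D(μ', α_Y·μ·α_X⁺). -/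
open Finset Matrix

noncomputable section

/-- Log-sum inequality per block, with the `0·log` convention. -/
lemma block_logsum {ι : Type*} (s : Finset ι) (a b : ι → ℝ)
    (ha : ∀ i ∈ s, 0 ≤ a i) (hb : ∀ i ∈ s, 0 ≤ b i)
    (hab : ∀ i ∈ s, a i ≤ 2 * b i) :
    (if (∑ i ∈ s, a i) = 0 then 0
      else (∑ i ∈ s, a i) * Real.log ((∑ i ∈ s, a i) / (∑ i ∈ s, b i)))
      ≤ ∑ i ∈ s, if a i = 0 then 0 else a i * Real.log (a i / b i) := by
  classical
  by_cases hA : (∑ i ∈ s, a i) = 0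
  · have hz : ∀ i ∈ s, a i = 0 := (Finset.sum_eq_zero_iff_of_nonneg ha).1 hA
    rw [if_pos hA]
    rw [Finset.sum_congr rfl (fun i hi => if_pos (hz i hi))]
    simp
  · rw [if_neg hA]
    set A := ∑ i ∈ s, a i with hAdef
    set B := ∑ i ∈ s, b i with hBdef
    have hApos : 0 < A := lt_of_le_of_ne (Finset.sum_nonneg ha) (Ne.symm hA)
    have hBpos : 0 < B := by
      have h2 : A ≤ 2 * B := by
        rw [hAdef, hBdef, Finset.mul_sum]
        exact Finset.sum_le_sum hab
      linarith
    set t := s.filter (fun i => a i ≠ 0) with htdef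
    have hsum_t : ∑ i ∈ t, a i = A := Finset.sum_filter_ne_zero s
    have hbt : ∑ i ∈ t, b i ≤ B :=
      Finset.sum_le_sum_of_subset_of_nonneg (Finset.filter_subset _ _)
        (fun i hi _ => hb i hi)
    have hRHS : (∑ i ∈ s, if a i = 0 then 0 else a i * Real.log (a i / b i))
        = ∑ i ∈ t, a i * Real.log (a i / b i) := by
      rw [htdef, Finset.sum_filter]
      apply Finset.sum_congr rfl
      intro i _
      by_cases h : a i = 0 <;> simp [h]
    rw [hRHS]
    have key : ∀ i ∈ t, a i * Real.log (A / B) + (a i - (A / B) * b i)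
        ≤ a i * Real.log (a i / b i) := by
      intro i hi
      have his : i ∈ s := Finset.mem_of_mem_filter i hi
      have hai : 0 < a i := lt_of_le_of_ne (ha i his)
        (Ne.symm (Finset.mem_filter.1 hi).2)
      have hbi : 0 < b i := by have := hab i his; linarith
      have hlog : Real.log (a i / b i) = Real.log (A / B)
          + Real.log ((a i * B) / (b i * A)) := by
        rw [← Real.log_mul (by positivity) (by positivity)]
        congr 1
        field_simp
      rw [hlog, mul_add]
      have h1 : 1 - ((a i * B) / (b i * A))⁻¹ ≤ Real.log ((a i * B) / (b i * A)) :=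
        Real.one_sub_inv_le_log_of_pos (by positivity)
      have h2 : a i * (1 - ((a i * B) / (b i * A))⁻¹)
          ≤ a i * Real.log ((a i * B) / (b i * A)) :=
        mul_le_mul_of_nonneg_left h1 hai.le
      have h3 : a i * (1 - ((a i * B) / (b i * A))⁻¹) = a i - (A / B) * b i := by
        rw [inv_div]
        field_simp
      linarith
    have hsumkey := Finset.sum_le_sum key
    have heq : ∑ i ∈ t, (a i * Real.log (A / B) + (a i - A / B * b i))
        = A * Real.log (A / B) + (A - (A / B) * ∑ i ∈ t, b i) := by
      rw [Finset.sum_add_distrib, ← Finset.sum_mul, hsum_t, Finset.sum_sub_distrib,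
        hsum_t, ← Finset.mul_sum]
    rw [heq] at hsumkey
    have hfin : A - (A / B) * ∑ i ∈ t, b i ≥ 0 := by
      have : (A / B) * (∑ i ∈ t, b i) ≤ (A / B) * B :=
        mul_le_mul_of_nonneg_left hbt (by positivity)
      rw [div_mul_cancel₀ _ hBpos.ne'] at this
      linarith
    linarith

/-- Aggregating along fibers of `f` does not increase KL divergence. -/
lemma KL_agg {Y Y' : Type*} [Fintype Y] [Fintype Y'] [DecidableEq Y']
    (f : Y → Y') (p m : Y → ℝ)
    (hp : ∀ y, 0 ≤ p y) (hm : ∀ y, 0 ≤ m y) (hpm : ∀ y, p y ≤ 2 * m y) :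
    KL (fun y' => ∑ y ∈ univ.filter (fun y => f y = y'), p y)
       (fun y' => ∑ y ∈ univ.filter (fun y => f y = y'), m y) ≤ KL p m := by
  unfold KL
  rw [← Finset.sum_fiberwise_of_maps_to (g := f)
    (fun y _ => mem_univ (f y)) (fun y => if p y = 0 then 0 else p y * Real.log (p y / m y))]
  exact Finset.sum_le_sum fun y' _ =>
    block_logsum _ _ _ (fun y _ => hp y) (fun y _ => hm y) (fun y _ => hpm y)

/-- Data-processing inequality for JSD under fiberwise aggregation. -/
lemma JSD_agg {Y Y' : Type*} [Fintype Y] [Fintype Y'] [DecidableEq Y']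
    (f : Y → Y') (p q : Y → ℝ) (hp : ∀ y, 0 ≤ p y) (hq : ∀ y, 0 ≤ q y) :
    JSD (fun y' => ∑ y ∈ univ.filter (fun y => f y = y'), p y)
        (fun y' => ∑ y ∈ univ.filter (fun y => f y = y'), q y) ≤ JSD p q := by
  unfold JSD
  apply Real.sqrt_le_sqrt
  have hmid : (fun y' => ((∑ y ∈ univ.filter (fun y => f y = y'), p y)
      + (∑ y ∈ univ.filter (fun y => f y = y'), q y)) / 2)
      = fun y' => ∑ y ∈ univ.filter (fun y => f y = y'), (p y + q y) / 2 := by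
    funext y'
    rw [← Finset.sum_add_distrib, Finset.sum_div]
  rw [hmid]
  have hm : ∀ y, 0 ≤ (p y + q y) / 2 := fun y => by have := hp y; have := hq y; linarith
  have h1 := KL_agg f p (fun y => (p y + q y) / 2) hp hm (fun y => by have := hq y; linarith)
  have h2 := KL_agg f q (fun y => (p y + q y) / 2) hq hm (fun y => by have := hp y; linarith)
  nlinarith [h1, h2]

lemma abs_exists_f {N M : Type*} [Fintype N] [Fintype M] [DecidableEq N]
    (α : Matrix N M ℝ) (hα : IsAbsMatrix α) :
    ∃ f : M → N, (∀ j i, α j i = if j = f i then 1 else 0) ∧ Function.Surjective f := by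
  choose f hf1 hf2 using fun i => (hα.2.1 i)
  refine ⟨f, fun j i => ?_, fun j => ?_⟩
  · by_cases h : j = f i
    · subst h; simp [hf1 i]
    · rcases hα.1 j i with h0 | h1
      · simp [h0, h]
      · exact absurd (hf2 i j h1) h
  · obtain ⟨i, hi⟩ := hα.2.2 j
    exact ⟨i, (hf2 i j hi).symm⟩

lemma abs_pinv_facts {N M : Type*} [Fintype N] [Fintype M] [DecidableEq N]
    (α : Matrix N M ℝ) (hα : IsAbsMatrix α) :
    α * pinv α = 1 ∧ (∀ i j, 0 ≤ pinv α i j) := by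
  obtain ⟨f, hf, hsurj⟩ := abs_exists_f α hα
  set d : N → ℝ := fun j => ∑ i, α j i with hd
  have hdiag : α * αᵀ = diagonal d := by
    ext j k
    rw [Matrix.mul_apply, hd]
    by_cases h : j = k
    · subst h
      rw [Matrix.diagonal_apply_eq]
      refine Finset.sum_congr rfl fun i _ => ?_
      rw [Matrix.transpose_apply, hf]
      by_cases h2 : j = f i <;> simp [h2, hf]
    · rw [Matrix.diagonal_apply_ne _ h]
      refine Finset.sum_eq_zero fun i _ => ?_
      rw [Matrix.transpose_apply, hf, hf]
      by_cases h1 : j = f i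
      · by_cases h2 : k = f i
        · exact absurd (h1.trans h2.symm) h
        · simp [h1, h2]
      · simp [h1]
  have hdpos : ∀ j, 0 < d j := by
    intro j
    obtain ⟨i, hi⟩ := hsurj j
    have h1 : (1 : ℝ) ≤ d j := by
      have : α j i = 1 := by rw [hf]; simp [hi]
      calc (1 : ℝ) = α j i := this.symm
        _ ≤ ∑ i', α j i' := Finset.single_le_sum
          (fun i' _ => by rcases hα.1 j i' with h | h <;> simp [h]) (mem_univ i)
    linarith
  have hdet : IsUnit (α * αᵀ).det := by
    rw [hdiag, Matrix.det_diagonal]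
    exact isUnit_iff_ne_zero.2 (ne_of_gt (Finset.prod_pos fun j _ => hdpos j))
  constructor
  · rw [pinv, ← Matrix.mul_assoc]
    exact Matrix.mul_nonsing_inv _ hdet
  · intro i j
    have hinv : (α * αᵀ)⁻¹ = diagonal (fun j => (d j)⁻¹) := by
      rw [hdiag]
      apply Matrix.inv_eq_right_inv
      rw [Matrix.diagonal_mul_diagonal]
      convert Matrix.diagonal_one using 2
      funext j'
      exact mul_inv_cancel₀ (ne_of_gt (hdpos j'))
    rw [pinv, hinv, Matrix.mul_diagonal, Matrix.transpose_apply]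
    have h0 : 0 ≤ α j i := by rcases hα.1 j i with h | h <;> simp [h]
    have := (hdpos j).le
    positivity

theorem isc_ge_isil {X X' Y Y' : Type*}
    [Fintype X] [Nonempty X] [Fintype X'] [Nonempty X']
    [Fintype Y] [Nonempty Y] [Fintype Y'] [Nonempty Y']
    [DecidableEq X'] [DecidableEq Y']
    (μ : Matrix Y X ℝ) (μ' : Matrix Y' X' ℝ)
    (αX : Matrix X' X ℝ) (αY : Matrix Y' Y ℝ)
    (hμ : IsColStoch μ) (hμ' : IsColStoch μ')
    (hαX : IsAbsMatrix αX) (hαY : IsAbsMatrix αY) :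
    supJSD (μ * pinv αX) (pinv αY * μ') ≥ supJSD μ' (αY * μ * pinv αX) := by
  obtain ⟨f, hf, hsurj⟩ := abs_exists_f αY hαY
  obtain ⟨hYinv, hYnn⟩ := abs_pinv_facts αY hαY
  obtain ⟨-, hXnn⟩ := abs_pinv_facts αX hαX
  set A := pinv αY * μ' with hA
  set B := μ * pinv αX with hB
  have hAnn : ∀ y x', 0 ≤ A y x' := by
    intro y x'
    rw [hA, Matrix.mul_apply]
    exact Finset.sum_nonneg fun y' _ => mul_nonneg (hYnn _ _) (hμ'.1 _ _)
  have hBnn : ∀ y x', 0 ≤ B y x' := by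
    intro y x'
    rw [hB, Matrix.mul_apply]
    exact Finset.sum_nonneg fun x _ => mul_nonneg (hμ.1 _ _) (hXnn _ _)
  have hμ'eq : μ' = αY * A := by rw [hA, ← Matrix.mul_assoc, hYinv, Matrix.one_mul]
  have hcol : ∀ (C : Matrix Y X' ℝ) (y' : Y') (x' : X'),
      (αY * C) y' x' = ∑ y ∈ univ.filter (fun y => f y = y'), C y x' := by
    intro C y' x'
    rw [Matrix.mul_apply, Finset.sum_filter]
    refine Finset.sum_congr rfl fun y _ => ?_
    by_cases h : y' = f y
    · rw [hf, if_pos h, if_pos h.symm, one_mul]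
    · rw [hf, if_neg h, if_neg (fun hh => h hh.symm), zero_mul]
  rw [ge_iff_le]
  unfold supJSD
  apply Finset.sup'_le
  intro x' _
  have key : JSD (fun y' => μ' y' x') (fun y' => (αY * μ * pinv αX) y' x')
      ≤ JSD (fun y => B y x') (fun y => A y x') := by
    have h1 : (fun y' => μ' y' x')
        = fun y' => ∑ y ∈ univ.filter (fun y => f y = y'), A y x' := by
      funext y'
      rw [hμ'eq, hcol]
    have h2 : (fun y' => (αY * μ * pinv αX) y' x')
        = fun y' => ∑ y ∈ univ.filter (fun y => f y = y'), B y x' := by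
      funext y'
      rw [Matrix.mul_assoc, ← hB, hcol]
    rw [h1, h2]
    exact (JSD_agg f _ _ (fun y => hAnn y x') (fun y => hBnn y x')).trans
      (le_of_eq (JSD_comm _ _))
  exact key.trans (Finset.le_sup' (fun x => JSD (fun y => B y x) (fun y => A y x)) (mem_univ x'))
end
end

section
/- The interventional information loss dominates the interventional superresolution information loss: E_IIL ≥ E_ISIL, i.e., D(μ, α_Y⁺·μ'·α_X) ≥ D(μ', α_Y·μ·α_X⁺). -/
open Finset Matrix

noncomputable section

namespace IilAux


noncomputable def klTerm (a b : ℝ) : ℝ := if a = 0 then 0 else a * Real.log (a / b)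

lemma klTerm_zero (b : ℝ) : klTerm 0 b = 0 := if_pos rfl

lemma klTerm_smul {w : ℝ} (a b : ℝ) (hw : 0 ≤ w) :
    klTerm (w * a) (w * b) = w * klTerm a b := by
  rcases eq_or_lt_of_le hw with h | h
  · simp [klTerm, ← h]
  · unfold klTerm
    by_cases ha : a = 0
    · simp [ha]
    · rw [if_neg ha, if_neg (mul_ne_zero h.ne' ha), mul_div_mul_left _ _ h.ne']
      ring

lemma logsum {ι : Type*} (s : Finset ι) (a b : ι → ℝ) (ha : ∀ i ∈ s, 0 ≤ a i)
    (hb : ∀ i ∈ s, 0 ≤ b i) (hab : ∀ i ∈ s, b i = 0 → a i = 0) :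
    klTerm (∑ i ∈ s, a i) (∑ i ∈ s, b i) ≤ ∑ i ∈ s, klTerm (a i) (b i) := by
  set A := ∑ i ∈ s, a i with hA
  set B := ∑ i ∈ s, b i with hB
  have hA0 : 0 ≤ A := Finset.sum_nonneg ha
  rcases eq_or_lt_of_le hA0 with h0 | hApos
  · have hz : ∀ i ∈ s, a i = 0 := (Finset.sum_eq_zero_iff_of_nonneg ha).mp h0.symm
    rw [← h0, klTerm_zero]
    apply Finset.sum_nonneg
    intro i hi
    rw [hz i hi, klTerm_zero]
  · have hBpos : 0 < B := by
      rcases eq_or_lt_of_le (Finset.sum_nonneg hb : (0:ℝ) ≤ B) with h0 | h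
      · exfalso
        have hz : ∀ i ∈ s, b i = 0 := (Finset.sum_eq_zero_iff_of_nonneg hb).mp h0.symm
        have : A = 0 := Finset.sum_eq_zero fun i hi => hab i hi (hz i hi)
        linarith
      · exact h
    have key : ∀ i ∈ s, a i * Real.log (A / B) + (a i - b i * (A / B)) ≤ klTerm (a i) (b i) := by
      intro i hi
      by_cases h : a i = 0
      · rw [h, klTerm_zero]
        have : 0 ≤ b i * (A / B) := mul_nonneg (hb i hi) (by positivity)
        linarith
      · have hai : 0 < a i := lt_of_le_of_ne (ha i hi) (Ne.symm h)
        have hbi : 0 < b i := by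
          rcases eq_or_lt_of_le (hb i hi) with h0 | h'
          · exact absurd (hab i hi h0.symm) h
          · exact h'
        rw [klTerm, if_neg h]
        have hlog : Real.log ((b i * A) / (a i * B)) ≤ (b i * A) / (a i * B) - 1 :=
          Real.log_le_sub_one_of_pos (by positivity)
        have e : Real.log (a i / b i) =
            Real.log (A / B) - Real.log ((b i * A) / (a i * B)) := by
          rw [Real.log_div hai.ne' hbi.ne', Real.log_div hApos.ne' hBpos.ne',
            Real.log_div (mul_pos hbi hApos).ne' (mul_pos hai hBpos).ne',
            Real.log_mul hbi.ne' hApos.ne', Real.log_mul hai.ne' hBpos.ne']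
          ring
        have h3 : a i * ((b i * A) / (a i * B)) = b i * (A / B) := by
          field_simp
        have h4 := mul_le_mul_of_nonneg_left hlog hai.le
        rw [mul_sub, h3, mul_one] at h4
        rw [e, mul_sub]
        linarith
    calc klTerm A B = A * Real.log (A / B) := by rw [klTerm, if_neg hApos.ne']
      _ = ∑ i ∈ s, (a i * Real.log (A / B) + (a i - b i * (A / B))) := by
          rw [Finset.sum_add_distrib, Finset.sum_sub_distrib, ← Finset.sum_mul,
            ← Finset.sum_mul, ← hA, ← hB]
          have : B * (A / B) = A := by field_simp
          rw [this]
          ring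
      _ ≤ ∑ i ∈ s, klTerm (a i) (b i) := Finset.sum_le_sum key





lemma KL_eq {X : Type*} [Fintype X] (p q : X → ℝ) : KL p q = ∑ x, klTerm (p x) (q x) := rfl

noncomputable def jsdSq {X : Type*} [Fintype X] (p q : X → ℝ) : ℝ :=
  (1 / 2) * KL p (fun x => (p x + q x) / 2) + (1 / 2) * KL q (fun x => (p x + q x) / 2)

lemma JSD_eq {X : Type*} [Fintype X] (p q : X → ℝ) : JSD p q = Real.sqrt (jsdSq p q) := rfl

lemma JSD_symm {X : Type*} [Fintype X] (p q : X → ℝ) : JSD p q = JSD q p := by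
  have h : (fun x => (p x + q x) / 2) = (fun x => (q x + p x) / 2) := by
    funext x; ring
  rw [JSD, JSD, h, add_comm]

lemma JSD_nonneg {X : Type*} [Fintype X] (p q : X → ℝ) : 0 ≤ JSD p q := Real.sqrt_nonneg _

section push
variable {Y Y' : Type*} [Fintype Y] [Fintype Y'] [DecidableEq Y']

noncomputable def push (g : Y → Y') (p : Y → ℝ) : Y' → ℝ :=
  fun y' => ∑ y, if g y = y' then p y else 0

lemma push_nonneg (g : Y → Y') (p : Y → ℝ) (hp : ∀ y, 0 ≤ p y) (y' : Y') :
    0 ≤ push g p y' := by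
  apply Finset.sum_nonneg
  intro y _
  split <;> simp [hp y]

lemma push_eq (g : Y → Y') (p : Y → ℝ) (y' : Y') :
    push g p y' = ∑ y ∈ univ.filter (fun y => g y = y'), p y := (Finset.sum_filter _ _).symm

lemma KL_push (g : Y → Y') (p q : Y → ℝ) (hp : ∀ y, 0 ≤ p y) (hq : ∀ y, 0 ≤ q y)
    (hpq : ∀ y, q y = 0 → p y = 0) :
    KL (push g p) (push g q) ≤ KL p q := by
  rw [KL_eq, KL_eq, ← Finset.sum_fiberwise univ g (fun y => klTerm (p y) (q y))]
  apply Finset.sum_le_sum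
  intro y' _
  rw [push_eq, push_eq]
  exact logsum _ _ _ (fun y _ => hp y) (fun y _ => hq y) (fun y _ => hpq y)

lemma jsdSq_push (g : Y → Y') (p q : Y → ℝ) (hp : ∀ y, 0 ≤ p y) (hq : ∀ y, 0 ≤ q y) :
    jsdSq (push g p) (push g q) ≤ jsdSq p q := by
  have hm : (fun y' => (push g p y' + push g q y') / 2)
      = push g (fun y => (p y + q y) / 2) := by
    funext y'
    simp only [push]
    rw [← Finset.sum_add_distrib, Finset.sum_div]
    apply Finset.sum_congr rfl
    intro y _
    split <;> simp
  unfold jsdSq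
  rw [hm]
  have h1 : KL (push g p) (push g (fun y => (p y + q y) / 2)) ≤
      KL p (fun y => (p y + q y) / 2) := by
    apply KL_push g p _ hp (fun y => div_nonneg (add_nonneg (hp y) (hq y)) (by norm_num))
    intro y hy
    have := hp y; have := hq y
    linarith
  have h2 : KL (push g q) (push g (fun y => (p y + q y) / 2)) ≤
      KL q (fun y => (p y + q y) / 2) := by
    apply KL_push g q _ hq (fun y => div_nonneg (add_nonneg (hp y) (hq y)) (by norm_num))
    intro y hy
    have := hp y; have := hq y
    linarith
  have half : (0:ℝ) ≤ 1 / 2 := by norm_num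
  exact add_le_add (mul_le_mul_of_nonneg_left h1 half) (mul_le_mul_of_nonneg_left h2 half)

lemma JSD_push (g : Y → Y') (p q : Y → ℝ) (hp : ∀ y, 0 ≤ p y) (hq : ∀ y, 0 ≤ q y) :
    JSD (push g p) (push g q) ≤ JSD p q := by
  rw [JSD_eq, JSD_eq]
  exact Real.sqrt_le_sqrt (jsdSq_push g p q hp hq)

end push

lemma jsdSq_convex {Y ι : Type*} [Fintype Y] (s : Finset ι) (w : ι → ℝ)
    (hw : ∀ i ∈ s, 0 ≤ w i) (hw1 : ∑ i ∈ s, w i = 1)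
    (p : Y → ℝ) (q : ι → Y → ℝ) (hp : ∀ y, 0 ≤ p y) (hq : ∀ i ∈ s, ∀ y, 0 ≤ q i y) :
    jsdSq p (fun y => ∑ i ∈ s, w i * q i y) ≤ ∑ i ∈ s, w i * jsdSq p (q i) := by
  have eb : ∀ y, ((p y + ∑ i ∈ s, w i * q i y) / 2)
      = ∑ i ∈ s, w i * ((p y + q i y) / 2) := by
    intro y
    have ea : (∑ i ∈ s, w i * p y) = p y := by rw [← Finset.sum_mul, hw1, one_mul]
    calc (p y + ∑ i ∈ s, w i * q i y) / 2
        = (∑ i ∈ s, w i * p y + ∑ i ∈ s, w i * q i y) / 2 := by rw [ea]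
      _ = ∑ i ∈ s, w i * ((p y + q i y) / 2) := by
          rw [← Finset.sum_add_distrib, Finset.sum_div]
          apply Finset.sum_congr rfl
          intro i _
          ring
  have hbz : ∀ i ∈ s, ∀ y, w i * ((p y + q i y) / 2) = 0 → w i * p y = 0 := by
    intro i hi y h
    rcases mul_eq_zero.mp h with h0 | h0
    · rw [h0, zero_mul]
    · have hpy := hp y; have hqy := hq i hi y
      have : p y = 0 := by linarith [ (by linarith : p y + q i y = 0) ]
      rw [this, mul_zero]
  have key1 : ∀ y, klTerm (p y) ((p y + ∑ i ∈ s, w i * q i y) / 2)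
      ≤ ∑ i ∈ s, w i * klTerm (p y) ((p y + q i y) / 2) := by
    intro y
    have ea : p y = ∑ i ∈ s, w i * p y := by rw [← Finset.sum_mul, hw1, one_mul]
    calc klTerm (p y) ((p y + ∑ i ∈ s, w i * q i y) / 2)
        = klTerm (∑ i ∈ s, w i * p y) (∑ i ∈ s, w i * ((p y + q i y) / 2)) := by
          rw [← ea, eb]
      _ ≤ ∑ i ∈ s, klTerm (w i * p y) (w i * ((p y + q i y) / 2)) := by
          apply logsum
          · exact fun i hi => mul_nonneg (hw i hi) (hp y)
          · exact fun i hi => mul_nonneg (hw i hi)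
              (div_nonneg (add_nonneg (hp y) (hq i hi y)) (by norm_num))
          · exact fun i hi => hbz i hi y
      _ = ∑ i ∈ s, w i * klTerm (p y) ((p y + q i y) / 2) := by
          exact Finset.sum_congr rfl fun i hi => klTerm_smul _ _ (hw i hi)
  have key2 : ∀ y, klTerm (∑ i ∈ s, w i * q i y) ((p y + ∑ i ∈ s, w i * q i y) / 2)
      ≤ ∑ i ∈ s, w i * klTerm (q i y) ((p y + q i y) / 2) := by
    intro y
    calc klTerm (∑ i ∈ s, w i * q i y) ((p y + ∑ i ∈ s, w i * q i y) / 2)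
        = klTerm (∑ i ∈ s, w i * q i y) (∑ i ∈ s, w i * ((p y + q i y) / 2)) := by rw [eb]
      _ ≤ ∑ i ∈ s, klTerm (w i * q i y) (w i * ((p y + q i y) / 2)) := by
          apply logsum
          · exact fun i hi => mul_nonneg (hw i hi) (hq i hi y)
          · exact fun i hi => mul_nonneg (hw i hi)
              (div_nonneg (add_nonneg (hp y) (hq i hi y)) (by norm_num))
          · intro i hi h
            rcases mul_eq_zero.mp h with h0 | h0
            · rw [h0, zero_mul]
            · have hpy := hp y; have hqy := hq i hi y
              have : q i y = 0 := by linarith [(by linarith : p y + q i y = 0)]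
              rw [this, mul_zero]
      _ = ∑ i ∈ s, w i * klTerm (q i y) ((p y + q i y) / 2) := by
          exact Finset.sum_congr rfl fun i hi => klTerm_smul _ _ (hw i hi)
  have h1 : KL p (fun y => (p y + ∑ i ∈ s, w i * q i y) / 2)
      ≤ ∑ i ∈ s, w i * KL p (fun y => (p y + q i y) / 2) := by
    rw [KL_eq]
    calc ∑ y, klTerm (p y) ((p y + ∑ i ∈ s, w i * q i y) / 2)
        ≤ ∑ y, ∑ i ∈ s, w i * klTerm (p y) ((p y + q i y) / 2) :=
          Finset.sum_le_sum fun y _ => key1 y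
      _ = ∑ i ∈ s, w i * KL p (fun y => (p y + q i y) / 2) := by
          rw [Finset.sum_comm]
          exact Finset.sum_congr rfl fun i _ => by rw [KL_eq, Finset.mul_sum]
  have h2 : KL (fun y => ∑ i ∈ s, w i * q i y)
        (fun y => (p y + ∑ i ∈ s, w i * q i y) / 2)
      ≤ ∑ i ∈ s, w i * KL (q i) (fun y => (p y + q i y) / 2) := by
    rw [KL_eq]
    calc ∑ y, klTerm (∑ i ∈ s, w i * q i y) ((p y + ∑ i ∈ s, w i * q i y) / 2)
        ≤ ∑ y, ∑ i ∈ s, w i * klTerm (q i y) ((p y + q i y) / 2) :=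
          Finset.sum_le_sum fun y _ => key2 y
      _ = ∑ i ∈ s, w i * KL (q i) (fun y => (p y + q i y) / 2) := by
          rw [Finset.sum_comm]
          exact Finset.sum_congr rfl fun i _ => by rw [KL_eq, Finset.mul_sum]
  have half : (0:ℝ) ≤ 1 / 2 := by norm_num
  calc jsdSq p (fun y => ∑ i ∈ s, w i * q i y)
      ≤ (1 / 2) * (∑ i ∈ s, w i * KL p (fun y => (p y + q i y) / 2))
        + (1 / 2) * (∑ i ∈ s, w i * KL (q i) (fun y => (p y + q i y) / 2)) := by
        exact add_le_add (mul_le_mul_of_nonneg_left h1 half) (mul_le_mul_of_nonneg_left h2 half)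
    _ = ∑ i ∈ s, w i * jsdSq p (q i) := by
        rw [Finset.mul_sum, Finset.mul_sum, ← Finset.sum_add_distrib]
        apply Finset.sum_congr rfl
        intro i _
        unfold jsdSq
        ring

lemma jsd_convex_le {Y ι : Type*} [Fintype Y] (s : Finset ι) (w : ι → ℝ)
    (hw : ∀ i ∈ s, 0 ≤ w i) (hw1 : ∑ i ∈ s, w i = 1)
    (p : Y → ℝ) (q : ι → Y → ℝ) (hp : ∀ y, 0 ≤ p y) (hq : ∀ i ∈ s, ∀ y, 0 ≤ q i y)
    (M : ℝ) (hM : 0 ≤ M) (h : ∀ i ∈ s, JSD p (q i) ≤ M) :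
    JSD p (fun y => ∑ i ∈ s, w i * q i y) ≤ M := by
  have h1 := jsdSq_convex s w hw hw1 p q hp hq
  have h2 : ∑ i ∈ s, w i * jsdSq p (q i) ≤ M ^ 2 := by
    calc ∑ i ∈ s, w i * jsdSq p (q i) ≤ ∑ i ∈ s, w i * M ^ 2 := by
          apply Finset.sum_le_sum
          intro i hi
          apply mul_le_mul_of_nonneg_left ?_ (hw i hi)
          rcases le_or_gt (jsdSq p (q i)) 0 with h0 | h0
          · nlinarith
          · have hj := h i hi
            rw [JSD_eq] at hj
            calc jsdSq p (q i) = Real.sqrt (jsdSq p (q i)) ^ 2 := (Real.sq_sqrt h0.le).symm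
              _ ≤ M ^ 2 := pow_le_pow_left₀ (Real.sqrt_nonneg _) hj 2
      _ = M ^ 2 := by rw [← Finset.sum_mul, hw1, one_mul]
  rw [JSD_eq]
  calc Real.sqrt (jsdSq p fun y => ∑ i ∈ s, w i * q i y)
      ≤ Real.sqrt (M ^ 2) := Real.sqrt_le_sqrt (le_trans h1 h2)
    _ = M := by rw [Real.sqrt_sq hM]



lemma abs_exists {N M : Type*} [Fintype N] [Fintype M] [DecidableEq N] {α : Matrix N M ℝ}
    (h : IsAbsMatrix α) :
    ∃ f : M → N, (∀ j i, α j i = if j = f i then 1 else 0) ∧ Function.Surjective f := by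
  choose f hf using fun i => (h.2.1 i).exists
  refine ⟨f, fun j i => ?_, fun j => ?_⟩
  · by_cases hj : j = f i
    · rw [if_pos hj, hj]; exact hf i
    · rw [if_neg hj]
      rcases h.1 j i with h0 | h1
      · exact h0
      · exact absurd ((h.2.1 i).unique h1 (hf i)) hj
  · obtain ⟨i, hi⟩ := h.2.2 j
    exact ⟨i, (h.2.1 i).unique (hf i) hi⟩

lemma fiber_card_pos {N M : Type*} [Fintype N] [Fintype M] [DecidableEq N]
    {f : M → N} (hf : Function.Surjective f) (n : N) :
    0 < ((univ.filter (fun i => f i = n)).card : ℝ) := by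
  obtain ⟨i, hi⟩ := hf n
  have : i ∈ univ.filter (fun i => f i = n) := Finset.mem_filter.mpr ⟨Finset.mem_univ i, hi⟩
  exact_mod_cast Finset.card_pos.mpr ⟨i, this⟩

lemma pinv_apply {N M : Type*} [Fintype N] [Fintype M] [DecidableEq N] {α : Matrix N M ℝ}
    {f : M → N} (hα : ∀ j i, α j i = if j = f i then 1 else 0) (hf : Function.Surjective f)
    (m : M) (n : N) :
    pinv α m n = (if f m = n then 1 else 0) * ((univ.filter (fun i => f i = n)).card : ℝ)⁻¹ := by
  have hdiag : α * αᵀ =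
      Matrix.diagonal (fun j => ((univ.filter (fun i => f i = j)).card : ℝ)) := by
    ext j j'
    simp only [Matrix.mul_apply, Matrix.transpose_apply, Matrix.diagonal, Matrix.of_apply]
    have step : ∀ i, α j i * α j' i = if (j = f i ∧ j' = f i) then 1 else 0 := by
      intro i
      rw [hα, hα]
      by_cases h1 : j = f i <;> by_cases h2 : j' = f i <;> simp [h1, h2]
    rw [Finset.sum_congr rfl (fun i _ => step i)]
    by_cases h : j = j'
    · subst h
      rw [if_pos rfl, Finset.sum_boole]
      congr 1
      apply Finset.card_bij (fun i _ => i) <;> simp [eq_comm]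
    · rw [if_neg h]
      apply Finset.sum_eq_zero
      intro i _
      rw [if_neg]
      rintro ⟨h1, h2⟩
      exact h (h1.trans h2.symm)
  have hinv : (α * αᵀ)⁻¹ =
      Matrix.diagonal (fun j => ((univ.filter (fun i => f i = j)).card : ℝ)⁻¹) := by
    rw [hdiag]
    apply Matrix.inv_eq_right_inv
    rw [Matrix.diagonal_mul_diagonal]
    have : (fun j => ((univ.filter (fun i => f i = j)).card : ℝ)
        * ((univ.filter (fun i => f i = j)).card : ℝ)⁻¹) = fun _ => 1 := by
      funext j
      exact mul_inv_cancel₀ (fiber_card_pos hf j).ne'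
    rw [this, Matrix.diagonal_one]
  rw [pinv, hinv, Matrix.mul_diagonal, Matrix.transpose_apply, hα]
  congr 1
  simp [eq_comm]


end IilAux

theorem iil_ge_isil {X X' Y Y' : Type*}
    [Fintype X] [Nonempty X] [Fintype X'] [Nonempty X']
    [Fintype Y] [Nonempty Y] [Fintype Y'] [Nonempty Y']
    [DecidableEq X'] [DecidableEq Y']
    (μ : Matrix Y X ℝ) (μ' : Matrix Y' X' ℝ)
    (αX : Matrix X' X ℝ) (αY : Matrix Y' Y ℝ)
    (hμ : IsColStoch μ) (hμ' : IsColStoch μ')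
    (hαX : IsAbsMatrix αX) (hαY : IsAbsMatrix αY) :
    supJSD μ (pinv αY * μ' * αX) ≥ supJSD μ' (αY * μ * pinv αX) := by
  obtain ⟨f, hfα, hfsurj⟩ := IilAux.abs_exists hαX
  obtain ⟨g, hgα, hgsurj⟩ := IilAux.abs_exists hαY
  rw [ge_iff_le]
  set Mb := supJSD μ (pinv αY * μ' * αX) with hMb
  have hMb0 : 0 ≤ Mb := by
    obtain ⟨x0⟩ := (inferInstance : Nonempty X)
    rw [hMb, supJSD]
    exact le_trans (IilAux.JSD_nonneg _ _)
      (Finset.le_sup' (fun x => JSD (fun y => μ y x) (fun y => (pinv αY * μ' * αX) y x))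
        (Finset.mem_univ x0))
  unfold supJSD
  apply Finset.sup'_le
  intro x' _
  have hcpos : 0 < ((univ.filter (fun x => f x = x')).card : ℝ) :=
    IilAux.fiber_card_pos hfsurj x'
  -- Step 1: rewrite the column of αY * μ * pinv αX as a convex combination of pushforwards
  have hcol : (fun y' => (αY * μ * pinv αX) y' x')
      = (fun y' => ∑ x ∈ univ.filter (fun x => f x = x'),
          ((univ.filter (fun x => f x = x')).card : ℝ)⁻¹
            * IilAux.push g (fun y => μ y x) y') := by
    funext y'
    rw [Matrix.mul_apply]
    have step : ∀ x, (αY * μ) y' x * pinv αX x x'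
        = if f x = x' then ((univ.filter (fun x => f x = x')).card : ℝ)⁻¹
            * IilAux.push g (fun y => μ y x) y' else 0 := by
      intro x
      rw [IilAux.pinv_apply hfα hfsurj, Matrix.mul_apply]
      have hpp : (∑ y, αY y' y * μ y x) = IilAux.push g (fun y => μ y x) y' := by
        unfold IilAux.push
        apply Finset.sum_congr rfl
        intro y _
        rw [hgα]
        by_cases h : g y = y'
        · rw [if_pos h.symm, if_pos h, one_mul]
        · rw [if_neg (fun hh => h hh.symm), if_neg h, zero_mul]
      rw [hpp]
      by_cases h : f x = x'
      · rw [if_pos h, if_pos h]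
        ring
      · rw [if_neg h, if_neg h]
        ring
    rw [Finset.sum_congr rfl (fun x _ => step x), ← Finset.sum_filter]
  rw [hcol]
  -- Step 2: each pushforward column is within Mb of μ' column
  have hstep2 : ∀ x ∈ univ.filter (fun x => f x = x'),
      JSD (fun y' => μ' y' x') (IilAux.push g (fun y => μ y x)) ≤ Mb := by
    intro x hx
    have hfx : f x = x' := (Finset.mem_filter.mp hx).2
    have hq_eq : ∀ y, (pinv αY * μ' * αX) y x
        = ((univ.filter (fun z => g z = g y)).card : ℝ)⁻¹ * μ' (g y) x' := by
      intro y
      rw [Matrix.mul_apply]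
      have step : ∀ x'', (pinv αY * μ') y x'' * αX x'' x
          = if x'' = f x then (pinv αY * μ') y x'' else 0 := by
        intro x''
        rw [hfα]
        by_cases h : x'' = f x
        · rw [if_pos h, if_pos h, mul_one]
        · rw [if_neg h, if_neg h, mul_zero]
      rw [Finset.sum_congr rfl (fun x'' _ => step x''), Finset.sum_ite_eq' univ (f x),
        if_pos (Finset.mem_univ _), Matrix.mul_apply, hfx]
      have step2 : ∀ y', pinv αY y y' * μ' y' x'
          = if y' = g y then ((univ.filter (fun z => g z = g y)).card : ℝ)⁻¹
              * μ' (g y) x' else 0 := by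
        intro y'
        rw [IilAux.pinv_apply hgα hgsurj]
        by_cases h : y' = g y
        · subst h
          rw [if_pos rfl, if_pos rfl, one_mul]
        · rw [if_neg (fun hh => h hh.symm), if_neg h, zero_mul, zero_mul]
      rw [Finset.sum_congr rfl (fun y' _ => step2 y'), Finset.sum_ite_eq' univ (g y),
        if_pos (Finset.mem_univ _)]
    have hqnn : ∀ y, 0 ≤ (pinv αY * μ' * αX) y x := by
      intro y
      rw [hq_eq y]
      exact mul_nonneg (inv_nonneg.mpr (IilAux.fiber_card_pos hgsurj (g y)).le)
        (hμ'.1 _ _)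
    have hpush : IilAux.push g (fun y => (pinv αY * μ' * αX) y x)
        = fun y'0 => μ' y'0 x' := by
      funext y'0
      rw [IilAux.push_eq]
      have hconst : ∀ y ∈ univ.filter (fun y => g y = y'0),
          (pinv αY * μ' * αX) y x
            = ((univ.filter (fun z => g z = y'0)).card : ℝ)⁻¹ * μ' y'0 x' := by
        intro y hy
        have hgy : g y = y'0 := (Finset.mem_filter.mp hy).2
        rw [hq_eq y, hgy]
      rw [Finset.sum_congr rfl hconst, Finset.sum_const, nsmul_eq_mul, ← mul_assoc,
        mul_inv_cancel₀ (IilAux.fiber_card_pos hgsurj y'0).ne', one_mul]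
    calc JSD (fun y'0 => μ' y'0 x') (IilAux.push g (fun y => μ y x))
        = JSD (IilAux.push g (fun y => (pinv αY * μ' * αX) y x))
            (IilAux.push g (fun y => μ y x)) := by rw [hpush]
      _ ≤ JSD (fun y => (pinv αY * μ' * αX) y x) (fun y => μ y x) :=
          IilAux.JSD_push g _ _ hqnn (fun y => hμ.1 y x)
      _ = JSD (fun y => μ y x) (fun y => (pinv αY * μ' * αX) y x) := IilAux.JSD_symm _ _
      _ ≤ Mb := by
          rw [hMb, supJSD]
          exact Finset.le_sup' (fun x => JSD (fun y => μ y x)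
            (fun y => (pinv αY * μ' * αX) y x)) (Finset.mem_univ x)
  -- Step 3: conclude by convexity
  exact IilAux.jsd_convex_le (univ.filter (fun x => f x = x'))
    (fun _ => ((univ.filter (fun x => f x = x')).card : ℝ)⁻¹)
    (fun i _ => inv_nonneg.mpr hcpos.le)
    (by rw [Finset.sum_const, nsmul_eq_mul]; exact mul_inv_cancel₀ hcpos.ne')
    (fun y' => μ' y' x') (fun x => IilAux.push g (fun y => μ y x))
    (fun y' => hμ'.1 y' x')
    (fun x _ => IilAux.push_nonneg g _ (fun y => hμ.1 y x))
    Mb hMb0 hstep2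
end
end

section
/- Joint convexity bound used for shortness of the sup-JSD distance: for probability vectors p_1,…,p_n and q_1,…,q_n on a finite nonempty type X and nonnegative weights λ_1,…,λ_n with ∑ λ_i = 1, D_JSD(∑_i λ_i p_i, ∑_i λ_i q_i) ≤ max_i D_JSD(p_i, q_i). -/
open Finset Matrix

noncomputable section

/-- F-value rewrite. -/
lemma F_eq_perspective (a b : ℝ) (ha : 0 ≤ a) (hab : a ≤ 2 * b) :
    (if a = 0 then 0 else a * Real.log (a / b))
      = b * ((a / b) * Real.log (a / b)) := by
  by_cases h : a = 0
  · simp [h]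
  · have ha' : 0 < a := lt_of_le_of_ne ha (Ne.symm h)
    have hb : 0 < b := by nlinarith
    rw [if_neg h]
    field_simp

/-- Log-sum / joint convexity pointwise lemma. -/
lemma logsum {ι : Type*} [Fintype ι] (lam a b : ι → ℝ)
    (hl : ∀ i, 0 ≤ lam i) (ha : ∀ i, 0 ≤ a i) (hb : ∀ i, 0 ≤ b i)
    (hab : ∀ i, a i ≤ 2 * b i) :
    (if (∑ i, lam i * a i) = 0 then 0
      else (∑ i, lam i * a i) * Real.log ((∑ i, lam i * a i) / (∑ i, lam i * b i)))
    ≤ ∑ i, lam i * (if a i = 0 then 0 else a i * Real.log (a i / b i)) := by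
  set A := ∑ i, lam i * a i with hA
  set B := ∑ i, lam i * b i with hB
  have hA0 : 0 ≤ A := Finset.sum_nonneg fun i _ => mul_nonneg (hl i) (ha i)
  have hAB : A ≤ 2 * B := by
    rw [hA, hB, Finset.mul_sum]
    exact Finset.sum_le_sum fun i _ => by nlinarith [hl i, hab i, ha i, hb i]
  rw [F_eq_perspective A B hA0 hAB]
  have hRw : ∀ i, lam i * (if a i = 0 then 0 else a i * Real.log (a i / b i))
      = (lam i * b i) * ((a i / b i) * Real.log (a i / b i)) := by
    intro i
    rw [F_eq_perspective (a i) (b i) (ha i) (hab i)]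
    ring
  simp only [hRw]
  have hB0 : 0 ≤ B := Finset.sum_nonneg fun i _ => mul_nonneg (hl i) (hb i)
  rcases eq_or_lt_of_le hB0 with hBz | hBpos
  · -- B = 0
    have hBz' : B = 0 := hBz.symm
    have hAz : A = 0 := le_antisymm (by linarith) hA0
    have hsum0 : ∑ i, lam i * b i = 0 := by rw [← hB]; exact hBz'
    have hterm : ∀ i ∈ Finset.univ, lam i * b i = 0 :=
      (Finset.sum_eq_zero_iff_of_nonneg
        (fun j _ => mul_nonneg (hl j) (hb j))).1 hsum0
    rw [hAz, hBz']
    simp only [zero_div, mul_zero, zero_mul]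
    rw [Finset.sum_congr rfl (fun i hi => by rw [hterm i hi, zero_mul])]
    simp
  · -- B > 0 : Jensen
    have hzmem : ∀ i ∈ Finset.univ, a i / b i ∈ Set.Ici (0:ℝ) :=
      fun i _ => div_nonneg (ha i) (hb i)
    have hjensen := Real.convexOn_mul_log.map_centerMass_le
      (t := Finset.univ) (w := fun i => lam i * b i) (p := fun i => a i / b i)
      (fun i _ => mul_nonneg (hl i) (hb i)) (by exact hBpos) hzmem
    have hcm : Finset.univ.centerMass (fun i => lam i * b i) (fun i => a i / b i) = A / B := by
      rw [Finset.centerMass, ← hB]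
      rw [smul_eq_mul]
      have : ∑ i, (lam i * b i) • (a i / b i) = A := by
        rw [hA]
        refine Finset.sum_congr rfl fun i _ => ?_
        rcases eq_or_lt_of_le (hb i) with h0 | hpos
        · have : a i = 0 := le_antisymm (by nlinarith [hab i]) (ha i)
          simp [this, ← h0]
        · rw [smul_eq_mul]; field_simp
      rw [this, div_eq_inv_mul]
    rw [hcm] at hjensen
    have : B * ((A / B) * Real.log (A / B)) ≤ B * (Finset.univ.centerMass
        (fun i => lam i * b i) ((fun x => x * Real.log x) ∘ fun i => a i / b i)) :=
      mul_le_mul_of_nonneg_left hjensen hB0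
    refine this.trans_eq ?_
    rw [Finset.centerMass, ← hB, smul_eq_mul, ← mul_assoc, mul_inv_cancel₀ (ne_of_gt hBpos), one_mul]
    exact Finset.sum_congr rfl fun i _ => by simp [smul_eq_mul, Function.comp]
theorem jsd_joint_convexity_bound {X ι : Type*}
    [Fintype X] [Nonempty X] [Fintype ι] [Nonempty ι]
    (p q : ι → X → ℝ) (w : ι → ℝ)
    (hp : ∀ i, IsProbVec (p i)) (hq : ∀ i, IsProbVec (q i))
    (hw : ∀ i, 0 ≤ w i) (hw1 : ∑ i, w i = 1) :
    JSD (fun x => ∑ i, w i * p i x) (fun x => ∑ i, w i * q i x)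
      ≤ Finset.univ.sup' Finset.univ_nonempty fun i => JSD (p i) (q i) := by
  classical
  set M : ℝ := Finset.univ.sup' Finset.univ_nonempty fun i => JSD (p i) (q i) with hM
  have hMnn : 0 ≤ M := by
    rw [hM]
    exact le_trans (Real.sqrt_nonneg _)
      (Finset.le_sup' (fun i => JSD (p i) (q i)) (Finset.mem_univ (Classical.arbitrary ι)))
  -- KL convexity for the p-part
  have key : ∀ (r : ι → X → ℝ), (∀ i x, 0 ≤ r i x) → (∀ i x, r i x ≤ p i x + q i x) →
      KL (fun x => ∑ i, w i * r i x)
        (fun x => ((∑ i, w i * p i x) + (∑ i, w i * q i x)) / 2)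
      ≤ ∑ i, w i * KL (r i) (fun x => (p i x + q i x) / 2) := by
    intro r hr hrle
    rw [KL]
    have hx : ∀ x : X,
        (if (∑ i, w i * r i x) = 0 then 0 else
          (∑ i, w i * r i x) * Real.log ((∑ i, w i * r i x)
            / (((∑ i, w i * p i x) + (∑ i, w i * q i x)) / 2)))
        ≤ ∑ i, w i * (if r i x = 0 then 0 else
            r i x * Real.log (r i x / ((p i x + q i x) / 2))) := by
      intro x
      have hden : ((∑ i, w i * p i x) + (∑ i, w i * q i x)) / 2
          = ∑ i, w i * ((p i x + q i x) / 2) := by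
        rw [← Finset.sum_add_distrib]
        rw [Finset.sum_div]
        exact Finset.sum_congr rfl fun i _ => by ring
      rw [hden]
      exact logsum w (fun i => r i x) (fun i => (p i x + q i x) / 2)
        hw (fun i => hr i x)
        (fun i => by have := (hp i).1 x; have := (hq i).1 x; positivity)
        (fun i => by have := hrle i x; linarith)
    calc (∑ x, if (∑ i, w i * r i x) = 0 then 0 else
          (∑ i, w i * r i x) * Real.log ((∑ i, w i * r i x)
            / (((∑ i, w i * p i x) + (∑ i, w i * q i x)) / 2)))
        ≤ ∑ x, ∑ i, w i * (if r i x = 0 then 0 else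
            r i x * Real.log (r i x / ((p i x + q i x) / 2))) :=
          Finset.sum_le_sum fun x _ => hx x
      _ = ∑ i, w i * KL (r i) (fun x => (p i x + q i x) / 2) := by
          rw [Finset.sum_comm]
          exact Finset.sum_congr rfl fun i _ => by rw [KL, Finset.mul_sum]
  have hpkey := key p (fun i x => (hp i).1 x) (fun i x => by have := (hq i).1 x; linarith)
  have hqkey := key q (fun i x => (hq i).1 x) (fun i x => by have := (hp i).1 x; linarith)
  -- the inner quantity
  set S : ι → ℝ := fun i => (1 / 2) * KL (p i) (fun x => (p i x + q i x) / 2)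
    + (1 / 2) * KL (q i) (fun x => (p i x + q i x) / 2) with hS
  have hSle : ∀ i, S i ≤ M ^ 2 := by
    intro i
    have h1 : Real.sqrt (S i) ≤ M := by
      rw [hM]
      exact Finset.le_sup' (fun i => JSD (p i) (q i)) (Finset.mem_univ i)
    have h2 : S i ≤ Real.sqrt (S i) ^ 2 := by
      rcases le_or_gt 0 (S i) with h | h
      · rw [Real.sq_sqrt h]
      · nlinarith [Real.sqrt_nonneg (S i)]
    exact h2.trans (by nlinarith [Real.sqrt_nonneg (S i)])
  rw [JSD]
  refine (Real.sqrt_le_sqrt ?_).trans_eq (Real.sqrt_sq hMnn)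
  calc (1 / 2) * KL (fun x => ∑ i, w i * p i x)
          (fun x => ((∑ i, w i * p i x) + (∑ i, w i * q i x)) / 2)
        + (1 / 2) * KL (fun x => ∑ i, w i * q i x)
          (fun x => ((∑ i, w i * p i x) + (∑ i, w i * q i x)) / 2)
      ≤ (1 / 2) * ∑ i, w i * KL (p i) (fun x => (p i x + q i x) / 2)
        + (1 / 2) * ∑ i, w i * KL (q i) (fun x => (p i x + q i x) / 2) := by
        have : (0:ℝ) < 1/2 := by norm_num
        gcongr
    _ = ∑ i, w i * S i := by
        rw [hS]
        rw [Finset.mul_sum, Finset.mul_sum, ← Finset.sum_add_distrib]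
        exact Finset.sum_congr rfl fun i _ => by ring
    _ ≤ ∑ i, w i * M ^ 2 :=
        Finset.sum_le_sum fun i _ => mul_le_mul_of_nonneg_left (hSle i) (hw i)
    _ = M ^ 2 := by rw [← Finset.sum_mul, hw1, one_mul]
end
end
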